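/- With the notation above, P_N^k has at least N distinct real roots a_N < a_{N−1} < ... < a_1 satisfying the interlacing property −r_N < a_N < −r_{N−1} < a_{N−1} < ... < −r_2 < a_2 < −r_1 < a_1, provided D + λ²/(2k−1)² > 0 for all λ in [−r_N, 0]. -/

import Mathlib

/-!
Indexing from `0`: at `λ = -r i` every term of `P_N^k` but one vanishes, leaving
`-b i ∏_{l ≠ i} (r l - r i)`, whose sign is `(-1)^(i+1)` because exactly `i` of the factors are
negative. So `P_N^k` changes sign on each interval `(-r (i+1), -r i)`, while `P_N^k(-r 0) < 0`
and `P_N^k → +∞` (its leading coefficient is `1/(2k-1)^2 > 0`). The intermediate value theorem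
gives one root in each of these `N` disjoint intervals.
-/

open Polynomial Finset

/-- The characteristic polynomial `P_N^k` associated with the extended Burgers model. -/
noncomputable def PNk (N : ℕ) (D : ℝ) (b r : Fin N → ℝ) (k : ℕ) : Polynomial ℝ :=
  (C D + C (1 / (2 * (k : ℝ) - 1) ^ 2) * X ^ 2) * ∏ j, (X + C (r j))
    - ∑ i, C (b i) * ∏ j ∈ univ.erase i, (X + C (r j))

lemma exists_mem_Ioo_eq_zero_of_mul_neg {f : ℝ → ℝ} (hf : Continuous f) {a b : ℝ}
    (hab : a < b) (h : f a * f b < 0) : ∃ c ∈ Set.Ioo a b, f c = 0 := by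
  rcases mul_neg_iff.mp h with ⟨ha, hb⟩ | ⟨ha, hb⟩
  · exact intermediate_value_Ioo' hab.le hf.continuousOn ⟨hb, ha⟩
  · exact intermediate_value_Ioo hab.le hf.continuousOn ⟨ha, hb⟩

lemma neg_one_pow_mul_prod_erase_sub_pos {N : ℕ} {r : Fin N → ℝ} (hr : StrictMono r)
    (i : Fin N) : 0 < (-1) ^ (i : ℕ) * ∏ l ∈ univ.erase i, (r l - r i) := by
  have hsplit : univ.erase i = Iio i ∪ Ioi i := by
    ext l
    simp [lt_or_lt_iff_ne]
  rw [hsplit, prod_union (disjoint_Ioi_Iio i).symm]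
  have hbelow : ∏ l ∈ Iio i, (r l - r i) = (-1) ^ (i : ℕ) * ∏ l ∈ Iio i, (r i - r l) := by
    rw [← Fin.card_Iio i, ← prod_const, ← prod_mul_distrib]
    exact prod_congr rfl fun _ _ => by ring
  rw [hbelow, ← mul_assoc, ← mul_assoc, ← pow_add, Even.neg_one_pow ⟨_, rfl⟩, one_mul]
  exact mul_pos (prod_pos fun l hl => sub_pos.mpr (hr (mem_Iio.mp hl)))
    (prod_pos fun l hl => sub_pos.mpr (hr (mem_Ioi.mp hl)))

lemma natDegree_sum_C_mul_prod_erase_le {R ι : Type*} [CommSemiring R] [Nontrivial R]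
    [Fintype ι] [DecidableEq ι] (b r : ι → R) :
    (∑ i, C (b i) * ∏ j ∈ univ.erase i, (X + C (r j))).natDegree ≤ Fintype.card ι := by
  refine natDegree_sum_le_of_forall_le _ _ fun i _ => natDegree_C_mul_le _ _ |>.trans ?_
  refine (natDegree_prod_le _ _).trans ?_
  simp only [natDegree_X_add_C, sum_const, smul_eq_mul, mul_one]
  exact card_le_univ _

lemma two_mul_natCast_sub_one_ne_zero (k : ℕ) : 2 * (k : ℝ) - 1 ≠ 0 := by
  intro h
  have h2k : ((2 * k : ℕ) : ℝ) = (1 : ℕ) := by push_cast; linarith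
  exact absurd (Nat.cast_injective h2k) (by omega)

section

variable (N : ℕ) (D : ℝ) (b r : Fin N → ℝ) (k : ℕ)

lemma PNk_eval_neg (i : Fin N) :
    (PNk N D b r k).eval (-r i) = -(b i * ∏ l ∈ univ.erase i, (r l - r i)) := by
  have hvanish : ∀ s : Finset (Fin N), i ∈ s → ∏ j ∈ s, (-r i + r j) = 0 :=
    fun s hi => prod_eq_zero hi (neg_add_cancel _)
  simp only [PNk, eval_sub, eval_mul, eval_prod, eval_finsetSum, eval_add, eval_X, eval_C,
    hvanish univ (mem_univ i), mul_zero, zero_sub]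
  rw [sum_eq_single i (fun j _ hji => by rw [hvanish _ (mem_erase.mpr ⟨hji.symm, mem_univ i⟩),
    mul_zero]) (fun h => absurd (mem_univ i) h)]
  simp only [neg_add_eq_sub]

lemma neg_one_pow_mul_PNk_eval_neg_neg (hr : StrictMono r) (hb : ∀ i, 0 < b i) (i : Fin N) :
    (-1) ^ (i : ℕ) * (PNk N D b r k).eval (-r i) < 0 := by
  rw [PNk_eval_neg, mul_neg, neg_lt_zero, mul_left_comm]
  exact mul_pos (hb i) (neg_one_pow_mul_prod_erase_sub_pos hr i)

lemma natDegree_PNk_and_leadingCoeff_PNk :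
    (PNk N D b r k).natDegree = N + 2 ∧
      (PNk N D b r k).leadingCoeff = 1 / (2 * (k : ℝ) - 1) ^ 2 := by
  set c : ℝ := 1 / (2 * (k : ℝ) - 1) ^ 2
  have hc : c ≠ 0 := by simp [c, two_mul_natCast_sub_one_ne_zero]
  have hmonic : (∏ j, (X + C (r j))).Monic := monic_prod_of_monic _ _ fun j _ => monic_X_add_C _
  have hdeg_prod : (∏ j, (X + C (r j))).natDegree = N := by
    simp [natDegree_prod_of_monic _ _ fun j _ => monic_X_add_C (r j)]
  have hdeg_quad : (C D + C c * X ^ 2).natDegree = 2 := by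
    rw [natDegree_C_add, natDegree_C_mul_X_pow _ _ hc]
  have hlead_quad : (C D + C c * X ^ 2).leadingCoeff = c := by
    rw [leadingCoeff, hdeg_quad]
    simp
  have hquad_ne : C D + C c * X ^ 2 ≠ 0 := fun h => by simp [h] at hdeg_quad
  have hdeg_main : ((C D + C c * X ^ 2) * ∏ j, (X + C (r j))).natDegree = N + 2 := by
    rw [natDegree_mul hquad_ne hmonic.ne_zero, hdeg_quad, hdeg_prod, add_comm]
  have hlower : (∑ i, C (b i) * ∏ j ∈ univ.erase i, (X + C (r j))).natDegree
      < ((C D + C c * X ^ 2) * ∏ j, (X + C (r j))).natDegree := by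
    have := natDegree_sum_C_mul_prod_erase_le b r
    rw [Fintype.card_fin] at this
    omega
  refine ⟨?_, ?_⟩
  · rw [PNk, natDegree_sub_eq_left_of_natDegree_lt hlower, hdeg_main]
  · rw [PNk, leadingCoeff_sub_of_degree_lt (degree_lt_degree hlower), leadingCoeff_mul,
      hlead_quad, hmonic.leadingCoeff, mul_one]

lemma tendsto_PNk_eval_atTop :
    Filter.Tendsto (fun x => (PNk N D b r k).eval x) Filter.atTop Filter.atTop := by
  obtain ⟨hdeg, hlead⟩ := natDegree_PNk_and_leadingCoeff_PNk N D b r k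
  refine tendsto_atTop_of_leadingCoeff_nonneg _ ?_ (hlead ▸ by positivity)
  exact natDegree_pos_iff_degree_pos.mp (hdeg ▸ by omega)

lemma PNk_eval_neg_mul_PNk_eval_neg_succ_neg (hr : StrictMono r) (hb : ∀ i, 0 < b i)
    {i j : Fin N} (hij : (i : ℕ) + 1 = j) :
    (PNk N D b r k).eval (-r j) * (PNk N D b r k).eval (-r i) < 0 := by
  have hi := neg_one_pow_mul_PNk_eval_neg_neg N D b r k hr hb i
  have hj := neg_one_pow_mul_PNk_eval_neg_neg N D b r k hr hb j
  rw [← hij, pow_succ] at hj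
  have hsq : ((-1 : ℝ) ^ (i : ℕ)) ^ 2 = 1 := by
    rw [← pow_mul, mul_comm, pow_mul, neg_one_sq, one_pow]
  nlinarith [mul_pos_of_neg_of_neg hi hj]

lemma exists_PNk_root_interlacing (hr : StrictMono r) (hb : ∀ i, 0 < b i) (j : Fin N) :
    ∃ x, (PNk N D b r k).eval x = 0 ∧ -r j < x ∧
      ∀ i : Fin N, (i : ℕ) + 1 = j → x < -r i := by
  have hcont := (PNk N D b r k).continuous
  obtain ⟨_ | i, hj⟩ := j
  · have hneg := neg_one_pow_mul_PNk_eval_neg_neg N D b r k hr hb ⟨0, hj⟩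
    rw [pow_zero, one_mul] at hneg
    obtain ⟨M, hM_pos, hM_gt⟩ := ((tendsto_PNk_eval_atTop N D b r k).eventually_gt_atTop 0
      |>.and (Filter.eventually_gt_atTop (-r ⟨0, hj⟩))).exists
    obtain ⟨x, hx, hx0⟩ :=
      exists_mem_Ioo_eq_zero_of_mul_neg hcont hM_gt (mul_neg_of_neg_of_pos hneg hM_pos)
    exact ⟨x, hx0, hx.1, fun i hi => absurd hi (by simp)⟩
  · have hlt : -r ⟨i + 1, hj⟩ < -r ⟨i, Nat.lt_of_succ_lt hj⟩ :=
      neg_lt_neg (hr (Fin.mk_lt_mk.mpr i.lt_succ_self))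
    obtain ⟨x, hx, hx0⟩ := exists_mem_Ioo_eq_zero_of_mul_neg hcont hlt
      (PNk_eval_neg_mul_PNk_eval_neg_succ_neg N D b r k hr hb rfl)
    refine ⟨x, hx0, hx.1, fun i' hi' => ?_⟩
    have hi'_eq : i' = ⟨i, Nat.lt_of_succ_lt hj⟩ := Fin.ext (by simp at hi'; omega)
    exact hi'_eq ▸ hx.2

end

theorem stmt4 (N : ℕ) (D : ℝ) (b r : Fin N → ℝ) (k : ℕ)
    (hr : StrictMono r) (hb : ∀ i, 0 < b i) :
    ∃ a : Fin N → ℝ,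
      (∀ i, (PNk N D b r k).eval (a i) = 0) ∧
      (∀ i, -(r i) < a i) ∧
      (∀ i j : Fin N, (i : ℕ) + 1 = (j : ℕ) → a j < -(r i)) := by
  choose a hroot hlower hupper using exists_PNk_root_interlacing N D b r k hr hb
  exact ⟨a, hroot, hlower, fun i j hij => hupper j i hij⟩
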